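/- Let a and b be positive integers with gcd(a,b) = 1. Then the number of (a,b)-Dyck paths is |D_{a,b}| = (1/(a+b))·binom(a+b, a). -/

import Mathlib

/-- The number of `(a,b)`-Dyck paths: lattice paths from `(0,a)` to `(b,0)` with unit
south and east steps staying weakly below the segment joining these points, encoded as
weakly increasing sequences `c_1 ≤ … ≤ c_{a-1}` of naturals with `c_l ≤ ⌊b*l/a⌋`. -/
noncomputable def dyckCount (a b : ℕ) : ℕ :=
  Nat.card {c : Fin (a - 1) → ℕ //
    Monotone c ∧ ∀ l : Fin (a - 1), c l ≤ b * (l.1 + 1) / a}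

/-!
Write `n = a + b` and encode a path with `a` south and `b` east steps by the set `S ⊆ ℤ/n` of
positions of its south steps. The height `h(t) = n·#(S ∩ [0, t)) - a t` is `n`-periodic, and the
rotation of `S` that starts at position `s` stays below the diagonal iff `h` is minimal at `s`.
Since `h(t) ≡ -a t (mod n)` and `gcd(a, n) = 1`, the values `h(0), …, h(n-1)` are distinct, so
exactly one of the `n` rotations of each of the `choose n a` sets is a Dyck path (the cycle lemma).
Dyck paths correspond to the sequences `c` through the positions `l + c_l` of their south steps.
-/

open Finset
open scoped Pointwise

namespace RationalDyck

/-- `S` is the set of positions of the south steps in a path of `n` unit steps; the path stays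
weakly below the diagonal iff every prefix of length `t` has at least `a t / n` south steps. -/
def IsDyck {n : ℕ} (a : ℕ) (S : Finset (Fin n)) : Prop :=
  ∀ t ≤ n, a * t ≤ n * #{x ∈ S | x.val < t}

section CycleLemma

open scoped Fin.NatCast

variable {n : ℕ} [NeZero n] {a : ℕ} {S : Finset (Fin n)}

/-- The positions are read cyclically, so that `prefixCount S` is defined on all of `ℕ`. -/
def prefixCount (S : Finset (Fin n)) (t : ℕ) : ℕ := #{i ∈ range t | ((i : ℕ) : Fin n) ∈ S}

def height (a : ℕ) (S : Finset (Fin n)) (t : ℕ) : ℤ := n * prefixCount S t - a * t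

theorem prefixCount_eq_card_filter {t : ℕ} (ht : t ≤ n) :
    prefixCount S t = #{x ∈ S | x.val < t} := by
  have hval {i : ℕ} (hi : i < t) : ((i : Fin n) : ℕ) = i := Nat.mod_eq_of_lt (by omega)
  refine card_nbij' (fun i => (i : Fin n)) Fin.val (fun i hi => ?_) (fun x hx => ?_)
    (fun i hi => hval (mem_range.1 (mem_filter.1 hi).1)) fun x _ => Fin.cast_val_eq_self x
  · simp_all
  · simp_all

theorem prefixCount_self : prefixCount S n = #S := by
  rw [prefixCount_eq_card_filter le_rfl, filter_true_of_mem fun x _ => x.2]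

theorem prefixCount_add (s u : ℕ) :
    prefixCount S (s + u) = prefixCount S s + prefixCount (-(s : Fin n) +ᵥ S) u := by
  simp only [prefixCount, card_filter, sum_range_add, mem_neg_vadd_finset_iff, vadd_eq_add,
    Nat.cast_add]

theorem isDyck_iff_height_nonneg : IsDyck a S ↔ ∀ t ≤ n, 0 ≤ height a S t := by
  refine forall₂_congr fun t ht => ?_
  rw [height, sub_nonneg, prefixCount_eq_card_filter ht]
  norm_cast

theorem height_add (s u : ℕ) :
    height a S (s + u) = height a S s + height a (-(s : Fin n) +ᵥ S) u := by
  simp only [height, prefixCount_add]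
  push_cast
  ring

theorem height_self (hS : #S = a) : height a S n = 0 := by
  rw [height, prefixCount_self, hS]
  ring

theorem height_add_self (hS : #S = a) (t : ℕ) : height a S (t + n) = height a S t := by
  rw [height_add, height_self (by rw [card_vadd_finset, hS]), add_zero]

theorem height_mod (hS : #S = a) (t : ℕ) : height a S (t % n) = height a S t := by
  have hperiod : ∀ q, height a S (t % n + n * q) = height a S (t % n) := by
    intro q
    induction q with
    | zero => rw [mul_zero, add_zero]
    | succ q ih => rw [mul_add_one, ← add_assoc, height_add_self hS, ih]
  rw [← hperiod (t / n), Nat.mod_add_div]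

theorem exists_forall_height_le (hS : #S = a) :
    ∃ s : Fin n, ∀ t, height a S s ≤ height a S t := by
  obtain ⟨s, hs⟩ := Finite.exists_min fun s : Fin n => height a S s
  refine ⟨s, fun t => ?_⟩
  rw [← height_mod hS t]
  exact hs ⟨t % n, Nat.mod_lt t (NeZero.pos n)⟩

theorem isDyck_neg_vadd_iff (hS : #S = a) (s : Fin n) :
    IsDyck a (-s +ᵥ S) ↔ ∀ t, height a S s ≤ height a S t := by
  have hshift (u : ℕ) : height a (-s +ᵥ S) u = height a S (s + u) - height a S s := by
    rw [height_add, Fin.cast_val_eq_self]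
    ring
  simp only [isDyck_iff_height_nonneg, hshift, sub_nonneg]
  refine ⟨fun h t => ?_, fun h u _ => h _⟩
  rw [← height_mod hS t]
  have hr := Nat.mod_lt t (NeZero.pos n)
  rcases le_or_gt (s : ℕ) (t % n) with hst | hst
  · simpa [Nat.add_sub_cancel' hst] using h (t % n - s) (by omega)
  · rw [← height_add_self hS (t % n)]
    simpa [show (s : ℕ) + (t % n + n - s) = t % n + n by omega] using h (t % n + n - s) (by omega)

/-- `height a S t ≡ -a t [ZMOD n]`, and `a` is invertible modulo `n`. -/
theorem height_injective (hcop : a.Coprime n) :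
    Function.Injective fun s : Fin n => height a S s := by
  intro s s' h
  simp only [height] at h
  have hsum : a * s + n * prefixCount S s' = a * s' + n * prefixCount S s := by
    zify
    linarith
  have hmod : a * s ≡ a * s' [MOD n] := by
    calc a * s % n = (a * s + n * prefixCount S s') % n := (Nat.add_mul_mod_self_left _ _ _).symm
      _ = (a * s' + n * prefixCount S s) % n := by rw [hsum]
      _ = a * s' % n := Nat.add_mul_mod_self_left _ _ _
  have := Nat.ModEq.cancel_left_of_coprime hcop.symm hmod
  exact Fin.ext (by rwa [Nat.ModEq, Nat.mod_eq_of_lt s.2, Nat.mod_eq_of_lt s'.2] at this)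

theorem existsUnique_isDyck_neg_vadd (hcop : a.Coprime n) (hS : #S = a) :
    ∃! s : Fin n, IsDyck a (-s +ᵥ S) := by
  obtain ⟨s, hs⟩ := exists_forall_height_le hS
  refine ⟨s, (isDyck_neg_vadd_iff hS s).2 hs, fun s' hs' => height_injective (S := S) hcop ?_⟩
  exact le_antisymm ((isDyck_neg_vadd_iff hS s').1 hs' s) (hs s')

theorem card_isDyck_mul (hcop : a.Coprime n) :
    Nat.card {S : Finset (Fin n) // #S = a ∧ IsDyck a S} * n = n.choose a := by
  let rotate (p : {S : Finset (Fin n) // #S = a ∧ IsDyck a S} × Fin n) :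
      {T : Finset (Fin n) // #T = a} := ⟨p.2 +ᵥ p.1.1, by rw [card_vadd_finset, p.1.2.1]⟩
  have hrotate : Function.Bijective rotate := by
    refine ⟨?_, fun T => ?_⟩
    · rintro ⟨⟨S, hS, hSD⟩, s⟩ ⟨⟨S', _, hSD'⟩, s'⟩ h
      have hT : s +ᵥ S = s' +ᵥ S' := congrArg Subtype.val h
      obtain rfl : s = s' := (existsUnique_isDyck_neg_vadd hcop (S := s +ᵥ S)
        (by rw [card_vadd_finset, hS])).unique (by rwa [neg_vadd_vadd])
        (by rwa [hT, neg_vadd_vadd])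
      obtain rfl : S = S' := (vadd_left_cancel_iff s).1 hT
      rfl
    · obtain ⟨s, hs, -⟩ := existsUnique_isDyck_neg_vadd hcop T.2
      exact ⟨(⟨-s +ᵥ T.1, by rw [card_vadd_finset, T.2], hs⟩, s),
        Subtype.ext (vadd_neg_vadd s T.1)⟩
  have hsubsets : Nat.card {T : Finset (Fin n) // #T = a} = n.choose a := by
    rw [Nat.card_eq_fintype_card, Fintype.card_finset_len, Fintype.card_fin]
  rw [← hsubsets, ← Nat.card_eq_of_bijective rotate hrotate, Nat.card_prod, Nat.card_fin]

end CycleLemma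

section Positions

variable {a n : ℕ}

theorem card_filter_image_val_lt {g : Fin a → Fin n} (hg : StrictMono g) (t : ℕ) :
    #{x ∈ univ.image g | x.val < t} = #{l | (g l).val < t} := by
  rw [filter_image, card_image_of_injective _ hg.injective]

theorem isDyck_image_iff {g : Fin a → Fin n} (hg : StrictMono g) :
    IsDyck a (univ.image g) ↔ ∀ l, a * (g l : ℕ) ≤ n * l := by
  simp only [IsDyck, card_filter_image_val_lt hg]
  constructor
  · intro h l
    have hcount : #{m | (g m).val < g l} = l := by
      rw [← Fin.card_Iio l]
      congr 1
      ext m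
      simp [hg.lt_iff_lt]
    have := h (g l) (g l).2.le
    rwa [hcount] at this
  · intro h t ht
    set k := #{m | (g m).val < t}
    rcases lt_or_ge k a with hka | hka
    · have htl : t ≤ g ⟨k, hka⟩ := by
        by_contra! hlt
        have hsub : Iic ⟨k, hka⟩ ⊆ ({m | (g m).val < t} : Finset (Fin a)) := fun m hm =>
          mem_filter.2 ⟨mem_univ m,
            (show (g m : ℕ) ≤ g ⟨k, hka⟩ from hg.monotone (mem_Iic.1 hm)).trans_lt hlt⟩
        have := card_le_card hsub
        rw [Fin.card_Iic, Fin.val_mk] at this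
        omega
      calc a * t ≤ a * g ⟨k, hka⟩ := Nat.mul_le_mul_left a htl
        _ ≤ n * k := h _
    · have hk' : k = a := le_antisymm ((card_filter_le _ _).trans_eq (card_fin a)) hka
      rw [hk', mul_comm n]
      exact Nat.mul_le_mul_left a ht

def isDyckEquivStrictMono :
    {S : Finset (Fin n) // #S = a ∧ IsDyck a S} ≃
      {g : Fin a → Fin n // StrictMono g ∧ ∀ l, a * (g l : ℕ) ≤ n * l} where
  toFun S := ⟨S.1.orderEmbOfFin S.2.1, (S.1.orderEmbOfFin S.2.1).strictMono,
    (isDyck_image_iff (S.1.orderEmbOfFin S.2.1).strictMono).1 <| by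
      rw [image_orderEmbOfFin_univ]
      exact S.2.2⟩
  invFun g := ⟨univ.image g.1, by rw [card_image_of_injective _ g.2.1.injective, card_fin],
    (isDyck_image_iff g.2.1).2 g.2.2⟩
  left_inv S := Subtype.ext (image_orderEmbOfFin_univ _ _)
  right_inv g := Subtype.ext
    (orderEmbOfFin_unique _ (fun l => mem_image_of_mem _ (mem_univ l)) g.2.1).symm

theorem lt_of_mul_le_mul_of_lt {x l : ℕ} (hn : 0 < n) (hl : l < a) (h : a * x ≤ n * l) :
    x < n := by
  by_contra! hx
  nlinarith

def strictMonoFinEquivNat (hn : 0 < n) :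
    {g : Fin a → Fin n // StrictMono g ∧ ∀ l, a * (g l : ℕ) ≤ n * l} ≃
      {f : Fin a → ℕ // StrictMono f ∧ ∀ l, a * f l ≤ n * l} where
  toFun g := ⟨fun l => g.1 l, Fin.val_strictMono.comp g.2.1, g.2.2⟩
  invFun f := ⟨fun l => ⟨f.1 l, lt_of_mul_le_mul_of_lt hn l.2 (f.2.2 l)⟩,
    fun _ _ h => f.2.1 h, f.2.2⟩
  left_inv _ := rfl
  right_inv _ := rfl

end Positions

section Sequences

variable {k : ℕ}

theorem val_le_of_strictMono {m : ℕ} {f : Fin m → ℕ} (hf : StrictMono f) (l : Fin m) :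
    (l : ℕ) ≤ f l := by
  obtain ⟨l, hl⟩ := l
  induction l with
  | zero => exact Nat.zero_le _
  | succ l ih => exact (ih (by omega)).trans_lt (hf (Fin.mk_lt_mk.2 (Nat.lt_succ_self l)))

/-- With the indexing of `dyckCount` and `c_0 = 0`, `southPositions c l = l + c_l` is the position
of the `l`-th south step. -/
def southPositions (c : Fin k → ℕ) : Fin (k + 1) → ℕ := Fin.cons 0 fun l => c l + l + 1

theorem strictMono_southPositions_iff (c : Fin k → ℕ) :
    StrictMono (southPositions c) ↔ Monotone c := by
  rw [southPositions, Fin.strictMono_cons]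
  simp only [Nat.add_one_pos, implies_true, true_and]
  cases k with
  | zero => exact iff_of_true (Subsingleton.strictMono _) (Subsingleton.monotone _)
  | succ k =>
    rw [Fin.strictMono_iff_lt_succ, Fin.monotone_iff_le_succ]
    refine forall_congr' fun i => ?_
    simp only [Fin.val_castSucc, Fin.val_succ]
    omega

theorem forall_mul_southPositions_le_iff (b : ℕ) (c : Fin k → ℕ) :
    (∀ l, (k + 1) * southPositions c l ≤ (k + 1 + b) * l) ↔
      ∀ l : Fin k, c l ≤ b * (l + 1) / (k + 1) := by
  simp only [southPositions, Fin.forall_fin_succ, Fin.cons_zero, Fin.cons_succ, Fin.val_zero,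
    Fin.val_succ, mul_zero, le_refl, true_and]
  refine forall_congr' fun l => ?_
  rw [Nat.le_div_iff_mul_le k.succ_pos]
  constructor <;> intro h <;> linarith

theorem card_monotone_eq_card_strictMono (b : ℕ) :
    Nat.card {c : Fin k → ℕ // Monotone c ∧ ∀ l : Fin k, c l ≤ b * (l + 1) / (k + 1)} =
      Nat.card {f : Fin (k + 1) → ℕ //
        StrictMono f ∧ ∀ l, (k + 1) * f l ≤ (k + 1 + b) * l} := by
  refine Nat.card_eq_of_bijective (fun c => ⟨southPositions c.1,
    (strictMono_southPositions_iff _).2 c.2.1, (forall_mul_southPositions_le_iff b _).2 c.2.2⟩)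
    ⟨?_, ?_⟩
  · rintro ⟨c, _⟩ ⟨c', _⟩ h
    refine Subtype.ext (funext fun l => ?_)
    simpa [southPositions] using congrFun (congrArg Subtype.val h) l.succ
  · rintro ⟨f, hf, hfb⟩
    have hf0 : f 0 = 0 := by simpa using hfb 0
    have hcons : southPositions (fun l => f l.succ - (l + 1)) = f := by
      funext i
      induction i using Fin.cases with
      | zero => exact hf0.symm
      | succ l =>
        have := val_le_of_strictMono hf l.succ
        simp only [southPositions, Fin.cons_succ, Fin.val_succ] at this ⊢
        omega
    refine ⟨⟨fun l => f l.succ - (l + 1), ?_, ?_⟩, Subtype.ext hcons⟩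
    · rw [← strictMono_southPositions_iff, hcons]
      exact hf
    · rw [← forall_mul_southPositions_le_iff, hcons]
      exact hfb

end Sequences

theorem dyckCount_eq_card_isDyck (k b : ℕ) :
    dyckCount (k + 1) b =
      Nat.card {S : Finset (Fin (k + 1 + b)) // #S = k + 1 ∧ IsDyck (k + 1) S} := by
  rw [Nat.card_congr (isDyckEquivStrictMono.trans (strictMonoFinEquivNat (by omega))),
    ← card_monotone_eq_card_strictMono]
  rfl

end RationalDyck

open RationalDyck in
theorem dyck_coprime_general (a b : ℕ) (ha : 0 < a) (h : Nat.gcd a b = 1) :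
    (dyckCount a b : ℚ) = ((a + b).choose a : ℚ) / (a + b) := by
  obtain ⟨k, rfl⟩ : ∃ k, a = k + 1 := ⟨a - 1, by omega⟩
  have : NeZero (k + 1 + b) := ⟨by omega⟩
  have hcop : (k + 1).Coprime (k + 1 + b) := by
    rw [add_comm (k + 1)]
    exact Nat.coprime_add_self_right.2 h
  have hcount : dyckCount (k + 1) b * (k + 1 + b) = (k + 1 + b).choose (k + 1) := by
    rw [dyckCount_eq_card_isDyck, card_isDyck_mul hcop]
  rw [eq_div_iff (by positivity)]
  exact_mod_cast hcount

theorem dyck_coprime (a b : ℕ) (ha : 0 < a) (hb : 0 < b) (h : Nat.gcd a b = 1) :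
    (dyckCount a b : ℚ) = ((a + b).choose a : ℚ) / (a + b) :=
  dyck_coprime_general a b ha h
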